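/- Let n ≥ 2, J > 0 and H ∈ ℝ, and let P̃ be the (n+1)×(n+1) magnetization chain matrix of the mean-field Glauber dynamics. Let λ₂ be the second-largest eigenvalue of the full Glauber chain (which is also an eigenvalue of P̃). If f = (f_0,…,f_n) and g = (g_0,…,g_n) are both increasing eigenvectors of P̃ with eigenvalue λ₂ (i.e., P̃f = λ₂f, P̃g = λ₂g, f_k ≤ f_{k+1} and g_k ≤ g_{k+1} for all k, and neither f nor g is constant), then there exists a scalar r ∈ ℝ such that f = r·g. In other words, the increasing eigenvector of λ₂ is unique up to multiplication by a scalar. -/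

import Mathlib

/-- The spin value of a site: `+1` for `true`, `-1` for `false`. -/
def spin (b : Bool) : ℝ := if b then 1 else -1

/-- The rate at which the Glauber dynamics for the mean-field Ising model on the
complete graph with `n` vertices, coupling `J` and uniform external field `H`
flips the spin at vertex `x` of the configuration `σ`:
`(1/n) · 1/(1 + exp(−2 σ'_x (J Σ_{y≠x} σ_y + H)))` where `σ'_x = −σ_x`. -/
noncomputable def flipRate (n : ℕ) (J H : ℝ) (σ : Fin n → Bool) (x : Fin n) : ℝ :=
  (1 / (n : ℝ)) *
    (1 + Real.exp (-2 * spin (!σ x) *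
      (J * ∑ y ∈ Finset.univ.erase x, spin (σ y) + H)))⁻¹

/-- The transition matrix of the Glauber dynamics for the mean-field Ising model on
the complete graph with `n` vertices, coupling `J` and uniform external field `H`.
Transitions change at most one coordinate. -/
noncomputable def glauberP (n : ℕ) (J H : ℝ) : Matrix (Fin n → Bool) (Fin n → Bool) ℝ :=
  fun σ σ' =>
    if σ' = σ then 1 - ∑ x : Fin n, flipRate n J H σ x
    else ∑ x : Fin n, if σ' = Function.update σ x (!σ x) then flipRate n J H σ x else 0

/-- `μ` is a (real) eigenvalue of the matrix `M`. -/
def IsEigenvalue {m : Type*} [Fintype m] (M : Matrix m m ℝ) (μ : ℝ) : Prop :=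
  ∃ v : m → ℝ, v ≠ 0 ∧ M.mulVec v = μ • v

/-- `μ` is the second-largest eigenvalue of the transition matrix `M` whose
eigenvalues are real and satisfy `1 = λ₁ > λ₂ ≥ … ≥ λ_N`: it is the largest
eigenvalue different from `1`. -/
def IsSecondEigenvalue {m : Type*} [Fintype m] (M : Matrix m m ℝ) (μ : ℝ) : Prop :=
  IsEigenvalue M μ ∧ μ ≠ 1 ∧ ∀ μ' : ℝ, IsEigenvalue M μ' → μ' ≠ 1 → μ' ≤ μ


/-- Upward transition rate of the magnetization chain:
`P̃_{k,k+1} = ((n−k)/n) · 1/(1 + exp((n−2k−1)·2J − 2H))`. -/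
noncomputable def pUp (n : ℕ) (J H : ℝ) (k : ℕ) : ℝ :=
  (((n : ℝ) - k) / n) * (1 + Real.exp (((n : ℝ) - 2 * k - 1) * (2 * J) - 2 * H))⁻¹

/-- Downward transition rate of the magnetization chain:
`P̃_{k,k−1} = (k/n) · 1/(1 + exp(−(n−2k+1)·2J + 2H))`. -/
noncomputable def pDown (n : ℕ) (J H : ℝ) (k : ℕ) : ℝ :=
  ((k : ℝ) / n) * (1 + Real.exp (-((n : ℝ) - 2 * k + 1) * (2 * J) + 2 * H))⁻¹

/-- The `(n+1)×(n+1)` tridiagonal transition matrix of the magnetization chain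
associated to the mean-field Glauber dynamics.  (Note `pDown n J H 0 = 0` and
`pUp n J H n = 0`, implementing the conventions `P̃_{0,−1} = P̃_{n,n+1} = 0`.) -/
noncomputable def magP (n : ℕ) (J H : ℝ) : Matrix (Fin (n + 1)) (Fin (n + 1)) ℝ :=
  fun k l =>
    if (l : ℕ) = (k : ℕ) + 1 then pUp n J H k
    else if (k : ℕ) = (l : ℕ) + 1 then pDown n J H k
    else if k = l then 1 - pDown n J H k - pUp n J H k
    else 0

/-!
Every eigenspace of `P̃` is at most one-dimensional: `P̃` is tridiagonal with positive
superdiagonal entries `P̃_{k,k+1}` (`k < n`), so row `k` of `P̃ v = λ v` determines `v_{k+1}`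
from `v_0, …, v_k`, and an eigenvector is determined by `v_0`. A nonconstant eigenvector `g`
is nonzero, hence `g_0 ≠ 0`, and `f = (f_0 / g_0) • g`.
-/

namespace Matrix

section Hessenberg

variable {K : Type*} [Field K] {n : ℕ} {M : Matrix (Fin (n + 1)) (Fin (n + 1)) K}

theorem eq_zero_of_mulVec_eq_smul_of_apply_zero
    (hM : ∀ i j : Fin (n + 1), (i : ℕ) + 1 < j → M i j = 0)
    (hsup : ∀ i : Fin n, M i.castSucc i.succ ≠ 0)
    {μ : K} {v : Fin (n + 1) → K} (hv : M *ᵥ v = μ • v) (h0 : v 0 = 0) : v = 0 := by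
  suffices h : ∀ i j : Fin (n + 1), j ≤ i → v j = 0 from funext fun j => h j j le_rfl
  intro i
  induction i using Fin.induction with
  | zero => intro j hj; rwa [Fin.le_zero_iff.mp hj]
  | succ i ih =>
    have row : M i.castSucc i.succ * v i.succ = 0 := by
      have := congrFun hv i.castSucc
      rw [Pi.smul_apply, ih _ le_rfl, smul_zero, mulVec, dotProduct] at this
      rwa [Finset.sum_eq_single_of_mem i.succ (Finset.mem_univ _) fun l _ hl => ?_] at this
      rcases le_or_gt l i.castSucc with hle | hgt
      · rw [ih l hle, mul_zero]
      · have : (i : ℕ) + 1 < l := by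
          have := Fin.val_ne_of_ne hl
          simp only [Fin.lt_def, Fin.val_castSucc, Fin.val_succ] at hgt this
          omega
        rw [hM _ _ this, zero_mul]
    have hsucc : v i.succ = 0 := (mul_eq_zero.mp row).resolve_left (hsup i)
    intro j hj
    rcases eq_or_lt_of_le hj with rfl | hlt
    · exact hsucc
    · exact ih j (Fin.le_castSucc_iff.mpr hlt)

theorem eq_smul_of_mulVec_eq_smul
    (hM : ∀ i j : Fin (n + 1), (i : ℕ) + 1 < j → M i j = 0)
    (hsup : ∀ i : Fin n, M i.castSucc i.succ ≠ 0)
    {μ : K} {v w : Fin (n + 1) → K} (hv : M *ᵥ v = μ • v) (hw : M *ᵥ w = μ • w)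
    (hw0 : w 0 ≠ 0) : v = (v 0 / w 0) • w := by
  refine sub_eq_zero.mp (eq_zero_of_mulVec_eq_smul_of_apply_zero hM hsup (μ := μ) ?_ ?_)
  · rw [mulVec_sub, mulVec_smul, hv, hw, smul_sub, smul_comm]
  · simp [hw0]

end Hessenberg

end Matrix

theorem pUp_pos (n : ℕ) (J H : ℝ) {k : ℕ} (hk : k < n) : 0 < pUp n J H k := by
  have hkn : (k : ℝ) < n := by exact_mod_cast hk
  have hn : 0 < (n : ℝ) := by linarith [k.cast_nonneg (α := ℝ)]
  exact mul_pos (div_pos (by linarith) hn) (inv_pos.mpr (by positivity))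

theorem magP_castSucc_succ (n : ℕ) (J H : ℝ) (i : Fin n) :
    magP n J H i.castSucc i.succ = pUp n J H i := by
  simp [magP]

theorem magP_eq_zero_of_lt (n : ℕ) (J H : ℝ) {i j : Fin (n + 1)} (hij : (i : ℕ) + 1 < j) :
    magP n J H i j = 0 := by
  have h1 : (j : ℕ) ≠ i + 1 := by omega
  have h2 : (i : ℕ) ≠ j + 1 := by omega
  have h3 : i ≠ j := fun h => by subst h; omega
  simp [magP, h1, h2, h3]

theorem magP_increasing_eigenvector_unique_general
    (n : ℕ) (J H : ℝ) (lam : ℝ)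
    (f g : Fin (n + 1) → ℝ)
    (hf : (magP n J H).mulVec f = lam • f)
    (hg : (magP n J H).mulVec g = lam • g)
    (hgnc : ¬ ∀ k l : Fin (n + 1), g k = g l) :
    ∃ r : ℝ, f = r • g := by
  have hM (i j : Fin (n + 1)) (hij : (i : ℕ) + 1 < j) := magP_eq_zero_of_lt n J H hij
  have hsup (i : Fin n) : magP n J H i.castSucc i.succ ≠ 0 := by
    rw [magP_castSucc_succ]
    exact (pUp_pos n J H i.isLt).ne'
  have hg0 : g 0 ≠ 0 := fun h0 => hgnc fun k l => by
    simp [Matrix.eq_zero_of_mulVec_eq_smul_of_apply_zero hM hsup hg h0]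
  exact ⟨_, Matrix.eq_smul_of_mulVec_eq_smul hM hsup hf hg hg0⟩

/-- The increasing eigenvector of the magnetization chain `P̃` for the second-largest
eigenvalue `λ₂` of the full Glauber chain is unique up to multiplication by a scalar. -/
theorem magP_increasing_eigenvector_unique
    (n : ℕ) (hn : 2 ≤ n) (J H : ℝ) (hJ : 0 < J) (lam : ℝ)
    (hlam : IsSecondEigenvalue (glauberP n J H) lam)
    (f g : Fin (n + 1) → ℝ)
    (hf : (magP n J H).mulVec f = lam • f)
    (hg : (magP n J H).mulVec g = lam • g)
    (hfinc : ∀ k : Fin n, f k.castSucc ≤ f k.succ)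
    (hginc : ∀ k : Fin n, g k.castSucc ≤ g k.succ)
    (hfnc : ¬ ∀ k l : Fin (n + 1), f k = f l)
    (hgnc : ¬ ∀ k l : Fin (n + 1), g k = g l) :
    ∃ r : ℝ, f = r • g :=
  magP_increasing_eigenvector_unique_general n J H lam f g hf hg hgnc
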